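/- Let m ≥ 1, n ≥ 2 be integers, let V(P_n) = {v₁, …, vₙ} with vᵢ adjacent to vᵢ₊₁, and let D be a minimum dominating set of K_m ⊠ P_n. (a) If n ≡ 0 (mod 3), then D ∩ (V(K_m) × {vᵢ}) = ∅ for every i with 1 ≤ i ≤ n and i ≡ 0 or 1 (mod 3). (b) If n ≡ 2 (mod 3), then D ∩ (V(K_m) × {vᵢ}) = ∅ for every i with 1 ≤ i ≤ n and i ≡ 0 (mod 3). -/

import Mathlib

/-!
Project `D` to the path coordinate: the image `S` dominates `P_n` and `|S| ≤ |D|`. A vertex of a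
path dominates at most three vertices, so `|S| ≥ ⌈n/3⌉`; conversely `{a} × S'` dominates
`K_m ⊠ P_n` for every dominating set `S'` of `P_n`, so `|D| ≤ ⌈n/3⌉`, and `|S| = ⌈n/3⌉`.
If `j` elements of `S` lie below `s ∈ S` (positions counted from `0`), they alone dominate
`0, …, s - 2` and the `|S| - 1 - j` elements above `s` dominate `s + 2, …, n - 1`; hence
`s ≤ 3j + 1` and `n - s - 2 ≤ 3(|S| - 1 - j)`. For `n = 3|S|` this forces `s = 3j + 1`, and for
`n = 3|S| - 1` it forces `s ∈ {3j, 3j + 1}`.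
-/

open SimpleGraph Finset

/-- `D` is a dominating set of `G`: every vertex is in `D` or adjacent to a vertex of `D`. -/
def SimpleGraph.IsDominatingSet {V : Type*} (G : SimpleGraph V) (D : Set V) : Prop :=
  ∀ v : V, v ∈ D ∨ ∃ u ∈ D, G.Adj u v

/-- The domination number of a finite graph. -/
noncomputable def SimpleGraph.dominationNumber {V : Type*} [Fintype V]
    (G : SimpleGraph V) : ℕ :=
  sInf {k | ∃ D : Finset V, D.card = k ∧ G.IsDominatingSet ↑D}

/-- The bondage number of a finite graph: the least size of a set of edges whose removal
increases the domination number. -/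
noncomputable def SimpleGraph.bondageNumber {V : Type*} [Fintype V]
    (G : SimpleGraph V) : ℕ :=
  sInf {k | ∃ Z : Finset (Sym2 V), Z.card = k ∧ (↑Z : Set (Sym2 V)) ⊆ G.edgeSet ∧
    G.dominationNumber < (G.deleteEdges ↑Z).dominationNumber}

/-- The strong product of two simple graphs. -/
def SimpleGraph.strongProd {V W : Type*} (G : SimpleGraph V) (H : SimpleGraph W) :
    SimpleGraph (V × W) :=
  SimpleGraph.fromRel (fun a b =>
    (a.1 = b.1 ∧ H.Adj a.2 b.2) ∨ (G.Adj a.1 b.1 ∧ a.2 = b.2) ∨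
      (G.Adj a.1 b.1 ∧ H.Adj a.2 b.2))

infixl:70 " ⊠ " => SimpleGraph.strongProd

namespace SimpleGraph

variable {V W : Type*} {G : SimpleGraph V} {H : SimpleGraph W}

lemma strongProd_adj {a b : V × W} :
    (G ⊠ H).Adj a b ↔ a ≠ b ∧ (a.1 = b.1 ∨ G.Adj a.1 b.1) ∧ (a.2 = b.2 ∨ H.Adj a.2 b.2) := by
  rcases a with ⟨g, w⟩
  rcases b with ⟨g', w'⟩
  simp only [strongProd, fromRel_adj, ne_eq, Prod.mk.injEq, adj_comm G g' g, adj_comm H w' w,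
    eq_comm (a := g'), eq_comm (a := w'), or_self]
  constructor
  · rintro ⟨hne, h⟩
    exact ⟨hne, by tauto⟩
  · rintro ⟨hne, hg, hw⟩
    exact ⟨hne, by tauto⟩

lemma isDominatingSet_iff {D : Set V} : G.IsDominatingSet D ↔ ∀ v, ∃ u ∈ D, u = v ∨ G.Adj u v := by
  refine forall_congr' fun v => ⟨?_, ?_⟩
  · rintro (h | ⟨u, hu, h⟩)
    exacts [⟨v, h, Or.inl rfl⟩, ⟨u, hu, Or.inr h⟩]
  · rintro ⟨u, hu, rfl | h⟩
    exacts [Or.inl hu, Or.inr ⟨u, hu, h⟩]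

lemma isDominatingSet_top_singleton (a : V) : (⊤ : SimpleGraph V).IsDominatingSet {a} :=
  isDominatingSet_iff.2 fun v => ⟨a, rfl, (eq_or_ne a v).imp id id⟩

lemma IsDominatingSet.prod {A : Set V} {B : Set W} (hA : G.IsDominatingSet A)
    (hB : H.IsDominatingSet B) : (G ⊠ H).IsDominatingSet (A ×ˢ B) := by
  refine isDominatingSet_iff.2 fun ⟨g, w⟩ => ?_
  obtain ⟨a, ha, hag⟩ := isDominatingSet_iff.1 hA g
  obtain ⟨b, hb, hbw⟩ := isDominatingSet_iff.1 hB w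
  refine ⟨(a, b), ⟨ha, hb⟩, ?_⟩
  by_cases h : (a, b) = (g, w)
  · exact Or.inl h
  · exact Or.inr (strongProd_adj.2 ⟨h, hag, hbw⟩)

lemma IsDominatingSet.image_snd [DecidableEq W] [Nonempty V] {D : Finset (V × W)}
    (hD : (G ⊠ H).IsDominatingSet ↑D) : H.IsDominatingSet ↑(D.image Prod.snd) := by
  refine isDominatingSet_iff.2 fun w => ?_
  obtain ⟨u, hu, huv⟩ := isDominatingSet_iff.1 hD (Classical.arbitrary V, w)
  refine ⟨u.2, mem_image_of_mem _ hu, ?_⟩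
  rcases huv with rfl | h
  · exact Or.inl rfl
  · exact (strongProd_adj.1 h).2.2

variable [Fintype V] [Fintype W]

lemma dominationNumber_le_card {D : Finset V} (hD : G.IsDominatingSet ↑D) :
    G.dominationNumber ≤ #D :=
  Nat.sInf_le ⟨D, rfl, hD⟩

lemma exists_isDominatingSet_card_eq_dominationNumber (G : SimpleGraph V) :
    ∃ D : Finset V, #D = G.dominationNumber ∧ G.IsDominatingSet ↑D := by
  have : {k | ∃ D : Finset V, #D = k ∧ G.IsDominatingSet ↑D}.Nonempty :=
    ⟨_, univ, rfl, fun v => Or.inl (mem_univ v)⟩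
  exact Nat.sInf_mem this

lemma dominationNumber_top_le_one [Nonempty V] : (⊤ : SimpleGraph V).dominationNumber ≤ 1 := by
  classical
  obtain ⟨a⟩ := ‹Nonempty V›
  have h : (⊤ : SimpleGraph V).IsDominatingSet ↑({a} : Finset V) := by
    simpa only [coe_singleton] using isDominatingSet_top_singleton a
  simpa using dominationNumber_le_card h

lemma dominationNumber_strongProd_le (G : SimpleGraph V) (H : SimpleGraph W) :
    (G ⊠ H).dominationNumber ≤ G.dominationNumber * H.dominationNumber := by
  obtain ⟨A, hAcard, hA⟩ := G.exists_isDominatingSet_card_eq_dominationNumber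
  obtain ⟨B, hBcard, hB⟩ := H.exists_isDominatingSet_card_eq_dominationNumber
  rw [← hAcard, ← hBcard, ← card_product]
  exact dominationNumber_le_card (by simpa only [coe_product] using hA.prod hB)

end SimpleGraph

/-- `S ⊆ ℕ` dominates the path `0 — 1 — ⋯ — (n - 1)`. -/
def DominatesPath (n : ℕ) (S : Finset ℕ) : Prop :=
  ∀ v < n, ∃ t ∈ S, v ≤ t + 1 ∧ t ≤ v + 1

lemma SimpleGraph.IsDominatingSet.dominatesPath_image_val {n : ℕ} {T : Finset (Fin n)}
    (hT : (pathGraph n).IsDominatingSet ↑T) : DominatesPath n (T.image Fin.val) := by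
  intro v hv
  obtain ⟨u, hu, huv⟩ := isDominatingSet_iff.1 hT ⟨v, hv⟩
  refine ⟨u, mem_image_of_mem _ hu, ?_⟩
  rcases huv with rfl | h
  · simp
  · simp only [pathGraph_adj] at h
    omega

lemma dominationNumber_pathGraph_le (n : ℕ) : (pathGraph n).dominationNumber ≤ (n + 2) / 3 := by
  rcases n with _ | n
  · exact dominationNumber_le_card (D := ∅) fun v => v.elim0
  refine (dominationNumber_le_card (D := (range ((n + 3) / 3)).image
    fun i => (⟨min (3 * i + 1) n, by omega⟩ : Fin (n + 1))) ?_).trans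
    ((card_image_le).trans (card_range _).le)
  -- the vertex `v` is dominated by `3 * (v / 3) + 1`, or by the last vertex when that is too far
  refine isDominatingSet_iff.2 fun v => ⟨⟨min (3 * (v / 3) + 1) n, by omega⟩,
    mem_image.2 ⟨v / 3, mem_range.2 (by omega), rfl⟩, ?_⟩
  simp only [pathGraph_adj, Fin.ext_iff]
  omega

lemma card_le_three_mul_card_of_forall_near {U T : Finset ℕ}
    (h : ∀ v ∈ U, ∃ t ∈ T, v ≤ t + 1 ∧ t ≤ v + 1) : #U ≤ 3 * #T := by
  calc #U ≤ #(T.biUnion fun t => Icc (t - 1) (t + 1)) := by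
        refine card_le_card fun v hv => ?_
        obtain ⟨t, ht, hvt⟩ := h v hv
        exact mem_biUnion.2 ⟨t, ht, mem_Icc.2 (by omega)⟩
    _ ≤ ∑ t ∈ T, #(Icc (t - 1) (t + 1)) := card_biUnion_le
    _ ≤ ∑ _t ∈ T, 3 := sum_le_sum fun t _ => by simp only [Nat.card_Icc]; omega
    _ = 3 * #T := by rw [sum_const, smul_eq_mul, mul_comm]

lemma card_filter_lt_add_card_filter_gt_lt_card {S : Finset ℕ} {s : ℕ} (hs : s ∈ S) :
    #(S.filter (· < s)) + #(S.filter (s < ·)) < #S := by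
  rw [← card_union_of_disjoint (disjoint_filter.2 fun _ _ h h' => lt_asymm h h')]
  refine card_lt_card ((ssubset_iff_of_subset (union_subset (filter_subset _ _)
    (filter_subset _ _))).2 ⟨s, hs, ?_⟩)
  simp

namespace DominatesPath

variable {n : ℕ} {S : Finset ℕ}

lemma le_three_mul_card (hS : DominatesPath n S) : n ≤ 3 * #S := by
  simpa using card_le_three_mul_card_of_forall_near fun v hv => hS v (mem_range.1 hv)

lemma le_three_mul_card_filter_lt_add_one (hS : DominatesPath n S) {s : ℕ} (hs : s < n) :
    s ≤ 3 * #(S.filter (· < s)) + 1 := by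
  have := card_le_three_mul_card_of_forall_near (U := range (s - 1)) (T := S.filter (· < s))
    fun v hv => by
      rw [mem_range] at hv
      obtain ⟨t, ht, hvt⟩ := hS v (by omega)
      exact ⟨t, mem_filter.2 ⟨ht, by omega⟩, hvt⟩
  simp only [card_range] at this
  omega

lemma le_add_three_mul_card_filter_gt_add_two (hS : DominatesPath n S) (s : ℕ) :
    n ≤ s + 3 * #(S.filter (s < ·)) + 2 := by
  have := card_le_three_mul_card_of_forall_near (U := Ico (s + 2) n) (T := S.filter (s < ·))
    fun v hv => by
      rw [mem_Ico] at hv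
      obtain ⟨t, ht, hvt⟩ := hS v hv.2
      exact ⟨t, mem_filter.2 ⟨ht, by omega⟩, hvt⟩
  simp only [Nat.card_Ico] at this
  omega

/-- The witness `j` is the number of elements of `S` below `s`. -/
lemma exists_bounds_of_mem (hS : DominatesPath n S) {s : ℕ} (hs : s ∈ S) (hsn : s < n) :
    ∃ j, s ≤ 3 * j + 1 ∧ n + 3 * j + 1 ≤ s + 3 * #S := by
  have below := hS.le_three_mul_card_filter_lt_add_one hsn
  have above := hS.le_add_three_mul_card_filter_gt_add_two s
  have split := card_filter_lt_add_card_filter_gt_lt_card hs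
  exact ⟨_, below, by omega⟩

end DominatesPath

theorem min_dominating_empty_fibers_general (m n : ℕ)
    (D : Finset (Fin m × Fin n))
    (hdom : ((⊤ : SimpleGraph (Fin m)) ⊠ pathGraph n).IsDominatingSet ↑D)
    (hmin : D.card = ((⊤ : SimpleGraph (Fin m)) ⊠ pathGraph n).dominationNumber) :
    (n % 3 = 0 → ∀ i : ℕ, 1 ≤ i → i ≤ n → (i % 3 = 0 ∨ i % 3 = 1) →
      D.filter (fun p => (p.2 : ℕ) = i - 1) = ∅) ∧
    (n % 3 = 2 → ∀ i : ℕ, 1 ≤ i → i ≤ n → i % 3 = 0 →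
      D.filter (fun p => (p.2 : ℕ) = i - 1) = ∅) := by
  have bounds : ∀ p ∈ D, ∃ j, (p.2 : ℕ) ≤ 3 * j + 1 ∧ n + 3 * j + 1 ≤ p.2 + 3 * ((n + 2) / 3) := by
    intro p hp
    have : Nonempty (Fin m) := ⟨p.1⟩
    set S := (D.image Prod.snd).image Fin.val
    have hS : DominatesPath n S := hdom.image_snd.dominatesPath_image_val
    have hcard : #S ≤ (n + 2) / 3 :=
      calc #S ≤ #D := card_image_le.trans card_image_le
        _ ≤ 1 * ((n + 2) / 3) := hmin ▸ (dominationNumber_strongProd_le _ _).trans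
            (Nat.mul_le_mul dominationNumber_top_le_one (dominationNumber_pathGraph_le n))
        _ = (n + 2) / 3 := one_mul _
    have hlower := hS.le_three_mul_card
    obtain ⟨j, hj⟩ := hS.exists_bounds_of_mem (mem_image_of_mem _ (mem_image_of_mem _ hp)) p.2.2
    exact ⟨j, by omega⟩
  refine ⟨fun _ i _ _ _ => ?_, fun _ i _ _ _ => ?_⟩ <;>
  · refine filter_eq_empty_iff.2 fun p hp hpi => ?_
    obtain ⟨j, hj⟩ := bounds p hp
    omega

/-- **Lemma.** Let `D` be a minimum dominating set of `K_m ⊠ P_n`, where the vertices of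
`P_n` are `v₁, …, vₙ` (here `vᵢ` is the element of `Fin n` with value `i - 1`).
(a) If `n ≡ 0 (mod 3)`, then `D ∩ (V(K_m) × {vᵢ}) = ∅` for every `1 ≤ i ≤ n` with
`i ≡ 0, 1 (mod 3)`.
(b) If `n ≡ 2 (mod 3)`, then `D ∩ (V(K_m) × {vᵢ}) = ∅` for every `1 ≤ i ≤ n` with
`i ≡ 0 (mod 3)`. -/
theorem min_dominating_empty_fibers (m n : ℕ) (hm : 1 ≤ m) (hn : 2 ≤ n)
    (D : Finset (Fin m × Fin n))
    (hdom : ((⊤ : SimpleGraph (Fin m)) ⊠ pathGraph n).IsDominatingSet ↑D)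
    (hmin : D.card = ((⊤ : SimpleGraph (Fin m)) ⊠ pathGraph n).dominationNumber) :
    (n % 3 = 0 → ∀ i : ℕ, 1 ≤ i → i ≤ n → (i % 3 = 0 ∨ i % 3 = 1) →
      D.filter (fun p => (p.2 : ℕ) = i - 1) = ∅) ∧
    (n % 3 = 2 → ∀ i : ℕ, 1 ≤ i → i ≤ n → i % 3 = 0 →
      D.filter (fun p => (p.2 : ℕ) = i - 1) = ∅) :=
  min_dominating_empty_fibers_general m n D hdom hmin
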